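/- For any integer k ≥ 2, the natural density of k-tuples of positive integers with gcd equal to 1 is 1/ζ(k); i.e., lim_{N→∞} (1/N^k)·#{(x₁,…,x_k) ∈ [1,N]^k : gcd(x₁,…,x_k) = 1} = 1/ζ(k). -/

import Mathlib

/-
Möbius inversion over the divisors of `gcd x` gives the exact count
`#{x ∈ [1, N]^k | gcd x = 1} = ∑_{d ≤ N} μ(d) ⌊N/d⌋^k`. After dividing by `N^k`, the `d`-th
term tends to `μ(d) / d^k` and is bounded by `1 / d^k`, which is summable for `k ≥ 2`;
Tannery's theorem then gives the limit `∑ μ(d) / d^k`, which is `1 / ζ(k)` because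
`L(μ, s) ζ(s) = 1`.
-/

open Filter Topology Finset ArithmeticFunction
open scoped ArithmeticFunction.Moebius

theorem tendsto_natDiv_div_self_atTop (d : ℕ) :
    Tendsto (fun N : ℕ => ((N / d : ℕ) : ℝ) / N) atTop (𝓝 (d : ℝ)⁻¹) := by
  rcases eq_or_ne d 0 with rfl | hd
  · simp
  have hd' : (d : ℝ) ≠ 0 := Nat.cast_ne_zero.mpr hd
  have hfloor : Tendsto (fun N : ℕ => (⌊(N : ℝ) / d⌋₊ : ℝ) / ((N : ℝ) / d) * (d : ℝ)⁻¹)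
      atTop (𝓝 (1 * (d : ℝ)⁻¹)) :=
    (tendsto_nat_floor_div_atTop.comp
      (tendsto_natCast_atTop_atTop.atTop_div_const (by positivity))).mul_const _
  rw [one_mul] at hfloor
  refine hfloor.congr fun N => ?_
  rw [Nat.floor_div_eq_div]
  field_simp

theorem natDiv_div_self_le_inv (N d : ℕ) : ((N / d : ℕ) : ℝ) / N ≤ (d : ℝ)⁻¹ := by
  rcases eq_or_ne N 0 with rfl | hN
  · simp
  calc ((N / d : ℕ) : ℝ) / N ≤ (N : ℝ) / d / N := by gcongr; exact Nat.cast_div_le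
    _ = (d : ℝ)⁻¹ := by field_simp

theorem LSeries_ofReal_natCast (f : ℕ → ℝ) {k : ℕ} (hk : k ≠ 0) :
    LSeries (fun n => (f n : ℂ)) k = ↑(∑' n : ℕ, f n / (n : ℝ) ^ k) := by
  rw [Complex.ofReal_tsum, LSeries]
  refine tsum_congr fun n => ?_
  rcases eq_or_ne n 0 with rfl | hn
  · simp [hk]
  · simp [LSeries.term_of_ne_zero hn]

theorem tsum_moebius_div_pow {k : ℕ} (hk : 1 < k) :
    ∑' d : ℕ, (μ d : ℝ) / (d : ℝ) ^ k = (∑' n : ℕ, 1 / (n : ℝ) ^ k)⁻¹ := by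
  have hinv := LSeries_one_mul_Lseries_moebius (s := k) (by simpa using hk)
  have hone : (1 : ℕ → ℂ) = fun n => ((1 : ℝ) : ℂ) := by
    ext; simp
  have hmoebius : (fun n => ((μ n : ℤ) : ℂ)) = fun n => ((μ n : ℝ) : ℂ) := by
    ext; simp
  rw [hone, hmoebius, LSeries_ofReal_natCast _ (by omega), LSeries_ofReal_natCast _ (by omega),
    ← Complex.ofReal_mul, Complex.ofReal_eq_one] at hinv
  exact eq_inv_of_mul_eq_one_right hinv

theorem sum_moebius_filter_dvd_Icc {n N : ℕ} (hn : 0 < n) (hnN : n ≤ N) :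
    ∑ d ∈ Icc 1 N with d ∣ n, (μ d : ℤ) = if n = 1 then 1 else 0 := by
  have hdivisors : {d ∈ Icc 1 N | d ∣ n} = n.divisors := by
    ext d
    simp only [mem_filter, mem_Icc, Nat.mem_divisors]
    constructor
    · rintro ⟨-, hd⟩
      exact ⟨hd, hn.ne'⟩
    · rintro ⟨hd, -⟩
      exact ⟨⟨Nat.pos_of_dvd_of_pos hd hn, (Nat.le_of_dvd hn hd).trans hnN⟩, hd⟩
  rw [hdivisors, ← coe_mul_zeta_apply, moebius_mul_coe_zeta, one_apply]

section Tuples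

variable {ι : Type*} [Fintype ι] [DecidableEq ι]

theorem card_filter_forall_dvd_piFinset_Icc (N d : ℕ) :
    #{x ∈ Fintype.piFinset (fun _ : ι => Icc 1 N) | ∀ i, d ∣ x i} =
      (N / d) ^ Fintype.card ι := by
  have hfilter : {x ∈ Fintype.piFinset (fun _ : ι => Icc 1 N) | ∀ i, d ∣ x i} =
      Fintype.piFinset fun _ => {n ∈ Icc 1 N | d ∣ n} := by
    ext x
    simp [forall_and]
  rw [hfilter, Fintype.card_piFinset, prod_const, card_univ, ← Nat.Ioc_filter_dvd_card_eq_div]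
  rfl

theorem gcd_mem_Icc_of_mem_piFinset_Icc [Nonempty ι] {N : ℕ} {x : ι → ℕ}
    (hx : x ∈ Fintype.piFinset fun _ : ι => Icc 1 N) : univ.gcd x ∈ Icc 1 N := by
  obtain ⟨i⟩ := ‹Nonempty ι›
  have hxi := mem_Icc.mp (Fintype.mem_piFinset.mp hx i)
  have hdvd : univ.gcd x ∣ x i := gcd_dvd (mem_univ i)
  exact mem_Icc.mpr ⟨Nat.pos_of_dvd_of_pos hdvd hxi.1, (Nat.le_of_dvd hxi.1 hdvd).trans hxi.2⟩

theorem card_filter_gcd_eq_one_piFinset_Icc [Nonempty ι] (N : ℕ) :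
    (#{x ∈ Fintype.piFinset (fun _ : ι => Icc 1 N) | univ.gcd x = 1} : ℤ) =
      ∑ d ∈ Icc 1 N, μ d * (N / d : ℕ) ^ Fintype.card ι := by
  set S := Fintype.piFinset fun _ : ι => Icc 1 N
  calc (#{x ∈ S | univ.gcd x = 1} : ℤ)
      = ∑ x ∈ S, if univ.gcd x = 1 then 1 else 0 := by
        rw [← sum_boole]
    _ = ∑ x ∈ S, ∑ d ∈ Icc 1 N, if d ∣ univ.gcd x then μ d else 0 := by
        refine sum_congr rfl fun x hx => ?_
        have hgcd := mem_Icc.mp (gcd_mem_Icc_of_mem_piFinset_Icc hx)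
        rw [← sum_filter, sum_moebius_filter_dvd_Icc hgcd.1 hgcd.2]
    _ = ∑ d ∈ Icc 1 N, μ d * #{x ∈ S | ∀ i, d ∣ x i} := by
        rw [sum_comm]
        refine sum_congr rfl fun d _ => ?_
        simp_rw [Finset.dvd_gcd_iff, mem_univ, true_implies]
        rw [sum_ite, sum_const_zero, add_zero, sum_const, nsmul_eq_mul, mul_comm]
    _ = ∑ d ∈ Icc 1 N, μ d * (N / d : ℕ) ^ Fintype.card ι := by
        simp_rw [S, card_filter_forall_dvd_piFinset_Icc, Nat.cast_pow]

theorem card_filter_gcd_eq_one_div_pow_eq_tsum [Nonempty ι] (N : ℕ) :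
    (#{x ∈ Fintype.piFinset (fun _ : ι => Icc 1 N) | univ.gcd x = 1} : ℝ) /
        (N : ℝ) ^ Fintype.card ι =
      ∑' d : ℕ, (μ d : ℝ) * (((N / d : ℕ) : ℝ) / N) ^ Fintype.card ι := by
  have hcard : Fintype.card ι ≠ 0 := Fintype.card_ne_zero
  rw [tsum_eq_sum (s := Icc 1 N), ← Int.cast_natCast, card_filter_gcd_eq_one_piFinset_Icc,
    Int.cast_sum, sum_div]
  · refine sum_congr rfl fun d _ => ?_
    rw [Int.cast_mul, Int.cast_pow, Int.cast_natCast, div_pow, mul_div_assoc]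
  · intro d hd
    rcases Nat.eq_zero_or_pos d with rfl | hd0
    · simp
    · simp only [mem_Icc, not_and, not_le] at hd
      simp [Nat.div_eq_of_lt (hd hd0), hcard]

theorem tendsto_card_filter_gcd_eq_one_div_pow (hι : 1 < Fintype.card ι) :
    Tendsto (fun N : ℕ =>
        (#{x ∈ Fintype.piFinset (fun _ : ι => Icc 1 N) | univ.gcd x = 1} : ℝ) /
          (N : ℝ) ^ Fintype.card ι)
      atTop (𝓝 (∑' d : ℕ, (μ d : ℝ) / (d : ℝ) ^ Fintype.card ι)) := by
  have : Nonempty ι := Fintype.card_pos_iff.mp (by omega)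
  simp_rw [card_filter_gcd_eq_one_div_pow_eq_tsum, div_eq_mul_inv (μ _ : ℝ), ← inv_pow]
  refine tendsto_tsum_of_dominated_convergence
    (bound := fun d : ℕ => (d : ℝ)⁻¹ ^ Fintype.card ι) ?_
    (fun d => ((tendsto_natDiv_div_self_atTop d).pow _).const_mul _) (.of_forall fun N d => ?_)
  · simpa [inv_pow] using Real.summable_nat_pow_inv.mpr hι
  · rw [norm_mul, norm_pow, Real.norm_eq_abs, 
      Real.norm_of_nonneg (div_nonneg (Nat.cast_nonneg _) (Nat.cast_nonneg _))]
    calc |(μ d : ℝ)| * (((N / d : ℕ) : ℝ) / N) ^ Fintype.card ι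
        ≤ 1 * (d : ℝ)⁻¹ ^ Fintype.card ι := by
          gcongr
          · exact_mod_cast abs_moebius_le_one
          · exact natDiv_div_self_le_inv N d
      _ = (d : ℝ)⁻¹ ^ Fintype.card ι := one_mul _

end Tuples

theorem coprime_tuples_density (k : ℕ) (hk : 2 ≤ k) :
    Tendsto (fun N : ℕ =>
        (((Fintype.piFinset fun _ : Fin k => Finset.Icc 1 N).filter
            (fun x : Fin k → ℕ => Finset.univ.gcd x = 1)).card : ℝ) / (N : ℝ) ^ k)
      atTop (nhds (1 / ∑' n : ℕ+, (1 : ℝ) / (n : ℝ) ^ k)) := by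
  have hzeta : ∑' n : ℕ+, (1 : ℝ) / (n : ℝ) ^ k = ∑' n : ℕ, 1 / (n : ℝ) ^ k :=
    tsum_pnat_eq_tsum_of_eq_zero (f := fun n : ℕ => 1 / (n : ℝ) ^ k) (by simp; omega)
  rw [hzeta, one_div, ← tsum_moebius_div_pow (by omega)]
  simpa using tendsto_card_filter_gcd_eq_one_div_pow (ι := Fin k) (by simp; omega)
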